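/- Let p be a prime with p ≠ 2, p ≠ 5, and (5/p) = -1, and let q = p^n. Then the number of triples (a,b,c) in F_q^3 with c^4 - a*b*c^3 + (a^2+b^2-3)*c^2 - a*b*c + 1 = 0 equals q^2 + 4q + 3 if n is even, and q^2 + 3 if n is odd. -/

import Mathlib

/-!
Slicing at a fixed value of `z`, one has
`f₁(x, y, z) = z (x - z y)(x z - y) + (z² - z - 1)(z² + z - 1)`.
For `z² ≠ 1` the map `(x, y) ↦ (x - z y, x z - y)` is invertible, so the slice is a hyperbola
`u v = c`, with `q - 1` points, or the degenerate one `u v = 0`, with `2q - 1` points, exactly when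
`z` is a root of `(z² - z - 1)(z² + z - 1)`. The slice `z = 0` is empty and the slices `z = ±1`
are pairs of parallel lines `(x ∓ y)² = 1`. Summing gives `q² + 3 + q R`, where the number `R` of
roots is twice the number of square roots of `5` in `F_q`. Finally Euler's criterion, applied in
`F_q` to the element `5` of the prime field, gives `χ_{F_q}(5) = (5/p)^n = (-1)^n`.
-/

open Finset

theorem pow_pow_div_two_of_pow_eq_self {M : Type*} [Monoid M] {a : M} {p : ℕ} (hp : Odd p)
    (ha : a ^ p = a) (n : ℕ) : a ^ (p ^ n / 2) = (a ^ (p / 2)) ^ n := by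
  induction n with
  | zero => simp
  | succ n ih =>
    have hdiv : p ^ (n + 1) / 2 = p * (p ^ n / 2) + p / 2 := by
      obtain ⟨k, rfl⟩ := hp
      obtain ⟨m, hm⟩ := (odd_two_mul_add_one k).pow (n := n)
      have hm2 : (2 * m + 1) / 2 = m := by omega
      have : (2 * m + 1) * (2 * k + 1) = 2 * ((2 * k + 1) * m + k) + 1 := by ring
      rw [pow_succ, hm, hm2, this]
      omega
    rw [hdiv, pow_add, pow_mul, ha, ih, pow_succ]

theorem quadraticChar_intCast_eq_legendreSym_pow {p n : ℕ} [Fact p.Prime] (hp : p ≠ 2)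
    {F : Type*} [Field F] [Fintype F] [DecidableEq F] (hF : Fintype.card F = p ^ n) (a : ℤ) :
    quadraticChar F a = legendreSym p a ^ n := by
  have := charP_of_card_eq_prime_pow hF
  have hF2 : ringChar F ≠ 2 := by rwa [ringChar.eq F p]
  have hleg : legendreSym p a ^ n ∈ ({0, 1, -1} : Set ℤ) := by
    rcases quadraticChar_isQuadratic (ZMod p) a with h | h | h
    · rcases n with _ | n <;> simp [legendreSym, h]
    · simp [legendreSym, h]
    · rcases neg_one_pow_eq_or ℤ n with h' | h' <;> simp [legendreSym, h, h']
  refine Int.cast_injOn_of_ringChar_ne_two hF2 (quadraticChar_isQuadratic F a) hleg ?_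
  have hcast : (a : F) = ZMod.castHom (dvd_refl p) F (a : ZMod p) := by simp
  rw [quadraticChar_eq_pow_of_char_ne_two' hF2, hF, hcast, ← map_pow,
    pow_pow_div_two_of_pow_eq_self ((Fact.out : p.Prime).odd_of_ne_two hp) (ZMod.pow_card _),
    ← legendreSym.eq_pow, map_pow, map_intCast, Int.cast_pow]

theorem Nat.card_subtype_prod_prod_eq_sum {α β γ : Type*} [Fintype α] [Fintype β] [Fintype γ]
    (P : α → β → γ → Prop) [∀ a b c, Decidable (P a b c)] :
    Nat.card {v : α × β × γ // P v.1 v.2.1 v.2.2} = ∑ c, #{ab : α × β | P ab.1 ab.2 c} := by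
  let e : {v : α × β × γ // P v.1 v.2.1 v.2.2} ≃ Σ c : γ, {ab : α × β // P ab.1 ab.2 c} :=
    { toFun v := ⟨v.1.2.2, (v.1.1, v.1.2.1), v.2⟩
      invFun s := ⟨(s.2.1.1, s.2.1.2, s.1), s.2.2⟩
      left_inv _ := rfl
      right_inv _ := rfl }
  rw [Nat.card_congr e, Nat.card_sigma]
  simp only [Nat.card_eq_fintype_card, Fintype.card_subtype]

section FiniteField

variable {F : Type*} [Field F] [Fintype F] [DecidableEq F]

theorem card_filter_mul_eq (c : F) :
    (#{uv : F × F | uv.1 * uv.2 = c} : ℤ) =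
      Fintype.card F - 1 + if c = 0 then (Fintype.card F : ℤ) else 0 := by
  have hfiber (u : F) : #{v : F | u * v = c} = if u = 0 then #{v : F | c = 0} else 1 := by
    split_ifs with hu
    · simp [hu, eq_comm]
    · rw [card_eq_one]
      exact ⟨u⁻¹ * c, by ext v; simp [eq_inv_mul_iff_mul_eq₀ hu]⟩
  rw [card_filter, Fintype.sum_prod_type]
  simp only [← card_filter, hfiber]
  rw [Fintype.sum_eq_add_sum_compl 0, if_pos rfl,
    sum_congr rfl fun u hu => if_neg (by simpa using hu), sum_const, card_compl, card_singleton]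
  split_ifs with hc <;> simp [hc, Nat.cast_sub Fintype.card_pos]
  ring

theorem card_filter_sq_eq (hF : ringChar F ≠ 2) (a : F) :
    (#{x : F | x ^ 2 = a} : ℤ) = quadraticChar F a + 1 := by
  simpa [Set.toFinset_ofPred] using quadraticChar_card_sqrts hF a

theorem card_filter_sq_eq_one (hF : ringChar F ≠ 2) : #{t : F | t ^ 2 = 1} = 2 := by
  have h := card_filter_sq_eq hF 1
  rw [map_one] at h
  omega

theorem card_filter_quadratic_eq_zero (h2 : (2 : F) ≠ 0) (b c : F) :
    #{z : F | z ^ 2 + b * z + c = 0} = #{s : F | s ^ 2 = b ^ 2 - 4 * c} := by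
  refine card_equiv ((Equiv.mulLeft₀ (2 : F) h2).trans (Equiv.addRight b)) fun z => ?_
  have h4 : (4 : F) ≠ 0 := by simpa [show (4 : F) = 2 * 2 by norm_num] using h2
  simp only [mem_filter, mem_univ, true_and, Equiv.trans_apply, Equiv.mulLeft₀_apply,
    Equiv.coe_addRight]
  constructor
  · intro h
    linear_combination 4 * h
  · intro h
    have : 4 * (z ^ 2 + b * z + c) = 0 := by linear_combination h
    exact (mul_eq_zero.mp this).resolve_left h4

theorem card_filter_golden_eq_zero (h2 : (2 : F) ≠ 0) :
    #{z : F | (z ^ 2 - z - 1) * (z ^ 2 + z - 1) = 0} = 2 * #{s : F | s ^ 2 = 5} := by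
  have hminus : #{z : F | z ^ 2 - z - 1 = 0} = #{s : F | s ^ 2 = 5} := by
    convert card_filter_quadratic_eq_zero h2 (-1) (-1) using 4 <;> ring_nf
  have hplus : #{z : F | z ^ 2 + z - 1 = 0} = #{s : F | s ^ 2 = 5} := by
    convert card_filter_quadratic_eq_zero h2 1 (-1) using 4 <;> ring_nf
  have hdisj : Disjoint (α := Finset F) {z | z ^ 2 - z - 1 = 0} {z | z ^ 2 + z - 1 = 0} := by
    refine disjoint_filter.mpr fun z _ h₁ h₂ => ?_
    have hz : 2 * z = 0 := by linear_combination h₂ - h₁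
    rw [(mul_eq_zero.mp hz).resolve_left h2] at h₁
    norm_num at h₁
  simp only [mul_eq_zero]
  rw [filter_or, card_union_of_disjoint hdisj, hminus, hplus, two_mul]

end FiniteField

section CharacterVariety

variable {F : Type*} [Field F]

def f₁ (x y z : F) : F := z ^ 4 - x * y * z ^ 3 + (x ^ 2 + y ^ 2 - 3) * z ^ 2 - x * y * z + 1

theorem f₁_eq (x y z : F) :
    f₁ x y z = z * ((x - z * y) * (x * z - y)) + (z ^ 2 - z - 1) * (z ^ 2 + z - 1) := by
  unfold f₁
  ring

theorem f₁_eq_of_sq_eq_one {x y z : F} (hz : z ^ 2 = 1) : f₁ x y z = (x - z * y) ^ 2 - 1 := by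
  unfold f₁
  linear_combination (z ^ 2 - 2 + x ^ 2 - x * y * z) * hz

def sliceEquivOfSqNeOne (z : F) (hz : z ^ 2 ≠ 1) : F × F ≃ F × F where
  toFun xy := (xy.1 - z * xy.2, xy.1 * z - xy.2)
  invFun uv := ((uv.2 * z - uv.1) / (z ^ 2 - 1), (uv.2 - uv.1 * z) / (z ^ 2 - 1))
  left_inv xy := by
    have : z ^ 2 - 1 ≠ 0 := sub_ne_zero.mpr hz
    ext <;> field_simp <;> ring
  right_inv uv := by
    have : z ^ 2 - 1 ≠ 0 := sub_ne_zero.mpr hz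
    ext <;> field_simp <;> ring

variable [Fintype F] [DecidableEq F]

theorem card_slice_of_sq_eq_one (hF : ringChar F ≠ 2) {z : F} (hz : z ^ 2 = 1) :
    #{xy : F × F | f₁ xy.1 xy.2 z = 0} = 2 * Fintype.card F := by
  let e : F × F ≃ F × F :=
    { toFun xy := (xy.1 - z * xy.2, xy.2)
      invFun ty := (ty.1 + z * ty.2, ty.2)
      left_inv xy := by simp
      right_inv ty := by simp }
  rw [card_equiv e (t := {ty : F × F | ty.1 ^ 2 = 1}) fun xy => by
      simp [e, f₁_eq_of_sq_eq_one hz, sub_eq_zero],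
    ← univ_product_univ, filter_product_left fun t : F => t ^ 2 = 1, card_product,
    card_filter_sq_eq_one hF, card_univ]

theorem card_slice_of_sq_ne_one {z : F} (h0 : z ≠ 0) (hz : z ^ 2 ≠ 1) :
    #{xy : F × F | f₁ xy.1 xy.2 z = 0} =
      #{uv : F × F | uv.1 * uv.2 = -((z ^ 2 - z - 1) * (z ^ 2 + z - 1)) / z} := by
  refine card_equiv (sliceEquivOfSqNeOne z hz) fun xy => ?_
  simp only [mem_filter, mem_univ, true_and, f₁_eq, sliceEquivOfSqNeOne, Equiv.coe_fn_mk]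
  rw [eq_div_iff h0]
  constructor <;> intro h <;> linear_combination h

-- The slice sizes `0`, `2q`, `q - 1`, `2q - 1` of the four cases, as one sum of indicators.
theorem card_slice (hF : ringChar F ≠ 2) (z : F) :
    (#{xy : F × F | f₁ xy.1 xy.2 z = 0} : ℤ) =
      Fintype.card F - 1
        + (if (z ^ 2 - z - 1) * (z ^ 2 + z - 1) = 0 then (Fintype.card F : ℤ) else 0)
        + (if z ^ 2 = 1 then (Fintype.card F : ℤ) + 1 else 0)
        - (if z = 0 then (Fintype.card F : ℤ) - 1 else 0) := by
  by_cases h0 : z = 0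
  · subst h0
    simp [f₁]
  by_cases h1 : z ^ 2 = 1
  · rw [card_slice_of_sq_eq_one hF h1]
    simp [h1, h0]
    ring
  · rw [card_slice_of_sq_ne_one h0 h1, card_filter_mul_eq]
    simp [h0, h1]

theorem card_zeros_f₁ (hF : ringChar F ≠ 2) :
    (Nat.card {v : F × F × F // f₁ v.1 v.2.1 v.2.2 = 0} : ℤ) =
      Fintype.card F ^ 2 + 3 + 2 * Fintype.card F * (quadraticChar F 5 + 1) := by
  have hroots : (#{z : F | (z ^ 2 - z - 1) * (z ^ 2 + z - 1) = 0} : ℤ) =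
      2 * (quadraticChar F 5 + 1) := by
    rw [card_filter_golden_eq_zero (Ring.two_ne_zero hF), Nat.cast_mul, card_filter_sq_eq hF 5]
    norm_num
  rw [Nat.card_subtype_prod_prod_eq_sum fun x y z => f₁ x y z = 0]
  push_cast
  simp only [card_slice hF, sum_sub_distrib, sum_add_distrib, sum_ite, sum_const_zero, sum_const,
    nsmul_eq_mul, hroots, card_filter_sq_eq_one hF, filter_eq', mem_univ, if_true,
    card_singleton, card_univ]
  push_cast
  ring

end CharacterVariety

theorem stmt_9_general (p n : ℕ) [Fact p.Prime] (h2 : p ≠ 2)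
    (hleg : legendreSym p 5 = -1)
    (F : Type) [Field F] [Fintype F] (hF : Fintype.card F = p ^ n) :
    Nat.card {v : F × F × F //
      v.2.2 ^ 4 - v.1 * v.2.1 * v.2.2 ^ 3 + (v.1 ^ 2 + v.2.1 ^ 2 - 3) * v.2.2 ^ 2
        - v.1 * v.2.1 * v.2.2 + 1 = 0} =
      if Even n then (p ^ n) ^ 2 + 4 * p ^ n + 3 else (p ^ n) ^ 2 + 3 := by
  classical
  have hF2 : ringChar F ≠ 2 := by
    have := charP_of_card_eq_prime_pow hF
    rwa [ringChar.eq F p]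
  have hχ : quadraticChar F 5 = (-1) ^ n := by
    simpa [hleg] using quadraticChar_intCast_eq_legendreSym_pow h2 hF 5
  change Nat.card {v : F × F × F // f₁ v.1 v.2.1 v.2.2 = 0} = _
  rw [← Nat.cast_inj (R := ℤ), card_zeros_f₁ hF2, hχ, hF]
  split_ifs with hn
  · rw [hn.neg_one_pow]; push_cast; ring
  · rw [(Nat.not_even_iff_odd.mp hn).neg_one_pow]; push_cast; ring

theorem stmt_9 (p n : ℕ) [Fact p.Prime] (h2 : p ≠ 2) (h5 : p ≠ 5) (hn : 0 < n)
    (hleg : legendreSym p 5 = -1)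
    (F : Type) [Field F] [Fintype F] (hF : Fintype.card F = p ^ n) :
    Nat.card {v : F × F × F //
      v.2.2 ^ 4 - v.1 * v.2.1 * v.2.2 ^ 3 + (v.1 ^ 2 + v.2.1 ^ 2 - 3) * v.2.2 ^ 2
        - v.1 * v.2.1 * v.2.2 + 1 = 0} =
      if Even n then (p ^ n) ^ 2 + 4 * p ^ n + 3 else (p ^ n) ^ 2 + 3 :=
  stmt_9_general p n h2 hleg F hF
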